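/- arXiv:1810.13198 — 2 statements merged into one kernel-verified Lean document; each statement's English description precedes it below -/
import Mathlib

section
/- For every natural number k, the (k+1)×(k+1) determinant with (i,j) entry c_{i+j+1} (0 ≤ i, j ≤ k) equals the (k+1)×(k+1) determinant with (i,j) entry c_{i+j} (0 ≤ i, j ≤ k); that is, H_{2k+1} = H_{2k} for the Hankel determinants of the Catalan numbers. -/
/-!
`ballot m h` counts the paths of `m` steps `±1` from height `0` to height `h` that never go
below `0`. Splitting such a path at its last visit to `0` gives the Catalan recursion for
`ballot (2 * n) 0`, so `ballot (2 * n) 0 = c_n`. Cutting a path of length `m + m'` from `0` to `0`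
at time `m` gives `ballot (m + m') 0 = ∑ₕ ballot m h * ballot m' h`; by parity only heights
`2t + e` contribute when `m = 2i + e` and `m' = 2j + e`. So for `e = 0, 1` the Hankel matrix
`(c_{i+j+e})` is `L * Lᵀ` with `L i t = ballot (2i + e) (2t + e)` lower unitriangular, and both
determinants are `1`.
-/

open Finset Matrix

def ballot : ℕ → ℕ → ℕ
  | 0, 0 => 1
  | 0, _ + 1 => 0
  | m + 1, 0 => ballot m 1
  | m + 1, h + 1 => ballot m h + ballot m (h + 2)

theorem ballot_succ_zero (m : ℕ) : ballot (m + 1) 0 = ballot m 1 := rfl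

theorem ballot_succ_succ (m h : ℕ) : ballot (m + 1) (h + 1) = ballot m h + ballot m (h + 2) := rfl

theorem ballot_eq_zero_of_lt : ∀ {m h : ℕ}, m < h → ballot m h = 0
  | 0, _ + 1, _ => rfl
  | m + 1, h + 1, hlt => by
    rw [ballot_succ_succ, ballot_eq_zero_of_lt (by omega), ballot_eq_zero_of_lt (by omega)]

theorem ballot_self : ∀ m : ℕ, ballot m m = 1
  | 0 => rfl
  | m + 1 => by rw [ballot_succ_succ, ballot_self m, ballot_eq_zero_of_lt (by omega)]

theorem ballot_eq_zero_of_odd : ∀ {m h : ℕ}, Odd (m + h) → ballot m h = 0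
  | 0, 0, hodd => absurd hodd Nat.not_odd_zero
  | 0, _ + 1, _ => rfl
  | m + 1, 0, hodd => ballot_eq_zero_of_odd (m := m) (h := 1) (by simpa using hodd)
  | m + 1, h + 1, hodd => by
    rw [Nat.odd_iff] at hodd
    rw [ballot_succ_succ, ballot_eq_zero_of_odd (Nat.odd_iff.2 (by omega)),
      ballot_eq_zero_of_odd (Nat.odd_iff.2 (by omega))]

theorem ballot_succ_succ_eq_sum (m h : ℕ) :
    ballot (m + 1) (h + 1) = ∑ p ∈ antidiagonal m, ballot p.1 0 * ballot p.2 h := by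
  induction m generalizing h with
  | zero => cases h <;> rfl
  | succ m ih =>
    rw [Nat.sum_antidiagonal_succ', ballot_succ_succ, ih (h + 1)]
    cases h with
    | zero => simp [ballot]
    | succ h =>
      rw [ih h]
      simp [ballot, mul_add, sum_add_distrib]

theorem sum_ballot_succ_mul_ballot {m m' R : ℕ} (hm : m + 1 < R) :
    ∑ h ∈ range R, ballot (m + 1) h * ballot m' h =
      ∑ h ∈ range R, ballot m h * ballot (m' + 1) h := by
  obtain ⟨r, rfl⟩ : ∃ r, R = r + 1 := ⟨R - 1, by omega⟩
  have hr : ballot m r = 0 := ballot_eq_zero_of_lt (by omega)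
  have hr' : ballot m (r + 1) = 0 := ballot_eq_zero_of_lt (by omega)
  rw [sum_range_succ', sum_range_succ' (fun h => ballot m h * _)]
  simp only [ballot_succ_zero, ballot_succ_succ, add_mul, mul_add, sum_add_distrib]
  -- Both sides are `∑ ballot m h * ballot m' (h + 1) + ∑ ballot m (h + 1) * ballot m' h`, up to
  -- boundary terms at `h = r, r + 1`, which vanish as `m < r`.
  have e1 := sum_range_succ (fun x => ballot m x * ballot m' (x + 1)) r
  have e2 := sum_range_succ' (fun x => ballot m x * ballot m' (x + 1)) r
  have e3 := sum_range_succ (fun x => ballot m (x + 1) * ballot m' x) r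
  have e4 := sum_range_succ' (fun x => ballot m (x + 1) * ballot m' x) r
  simp only [hr, hr', zero_mul, add_zero] at e1 e3
  simp only [zero_add, add_assoc, Nat.reduceAdd] at e2 e4
  omega

theorem sum_ballot_mul_ballot {m R : ℕ} (m' : ℕ) (hm : m < R) :
    ∑ h ∈ range R, ballot m h * ballot m' h = ballot (m + m') 0 := by
  induction m generalizing m' with
  | zero =>
    rw [sum_eq_single_of_mem 0 (mem_range.2 hm) fun h _ hh => ?_]
    · simp [ballot]
    · obtain ⟨h, rfl⟩ := Nat.exists_eq_succ_of_ne_zero hh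
      simp [ballot]
  | succ m ih =>
    rw [sum_ballot_succ_mul_ballot hm, ih (m' + 1) (by omega), add_right_comm, add_assoc]

theorem Finset.sum_range_two_mul {M : Type*} [AddCommMonoid M] (f : ℕ → M) (n : ℕ) :
    ∑ i ∈ range (2 * n), f i = ∑ i ∈ range n, (f (2 * i) + f (2 * i + 1)) := by
  induction n with
  | zero => simp
  | succ n ih =>
    rw [mul_add, mul_one, sum_range_succ, sum_range_succ, sum_range_succ, ih, add_assoc]

theorem Finset.Nat.sum_antidiagonal_two_mul {M : Type*} [AddCommMonoid M] (f : ℕ × ℕ → M)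
    (n : ℕ) (hf : ∀ p ∈ antidiagonal (2 * n), Odd p.1 → f p = 0) :
    ∑ p ∈ antidiagonal (2 * n), f p = ∑ p ∈ antidiagonal n, f (2 * p.1, 2 * p.2) := by
  refine (sum_of_injOn (fun p => (2 * p.1, 2 * p.2)) ?_ ?_ (fun p hp hp' => hf p hp ?_) ?_).symm
  · intro p _ q _ hpq
    simp only [Prod.mk.injEq] at hpq
    ext <;> omega
  · intro p hp
    simp only [mem_coe, HasAntidiagonal.mem_antidiagonal] at hp ⊢
    omega
  · rw [HasAntidiagonal.mem_antidiagonal] at hp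
    refine Nat.not_even_iff_odd.mp fun ⟨a, ha⟩ => hp' ⟨(a, n - a), ?_, ?_⟩
    · simp only [mem_coe, HasAntidiagonal.mem_antidiagonal]
      omega
    · ext <;> dsimp only <;> omega
  · simp

theorem ballot_two_mul_zero (n : ℕ) : ballot (2 * n) 0 = catalan n := by
  induction n using Nat.strong_induction_on with | _ n ih => ?_
  cases n with
  | zero => rw [mul_zero, catalan_zero]; rfl
  | succ n =>
    rw [show 2 * (n + 1) = 2 * n + 1 + 1 by ring, ballot_succ_zero, ballot_succ_succ_eq_sum,
      Nat.sum_antidiagonal_two_mul, catalan_succ']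
    · refine sum_congr rfl fun p hp => ?_
      rw [HasAntidiagonal.mem_antidiagonal] at hp
      rw [ih p.1 (by omega), ih p.2 (by omega)]
    · intro p _ hp
      rw [ballot_eq_zero_of_odd (by simpa using hp), zero_mul]

theorem sum_ballot_mul_ballot_same_parity {n e i : ℕ} (j : ℕ) (he : e < 2) (hi : i < n) :
    ∑ t ∈ range n, ballot (2 * i + e) (2 * t + e) * ballot (2 * j + e) (2 * t + e) =
      ballot (2 * (i + j + e)) 0 := by
  rw [show 2 * (i + j + e) = (2 * i + e) + (2 * j + e) by ring,
    ← sum_ballot_mul_ballot (2 * j + e) (R := 2 * n) (by omega), sum_range_two_mul]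
  refine sum_congr rfl fun t _ => ?_
  have hodd (h : ℕ) (hh : Odd (h + e)) : ballot (2 * i + e) h = 0 :=
    ballot_eq_zero_of_odd (by rw [Nat.odd_iff] at *; omega)
  obtain rfl | rfl : e = 0 ∨ e = 1 := by omega
  · rw [hodd (2 * t + 1) (by simp)]
    simp only [zero_mul, add_zero]
  · rw [hodd (2 * t) (by simp), zero_mul, zero_add]

def ballotMatrix (R : Type*) [NatCast R] (n e : ℕ) : Matrix (Fin n) (Fin n) R :=
  of fun i t => (ballot (2 * i + e) (2 * t + e) : R)

variable {R : Type*} [CommRing R] {n e : ℕ}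

theorem det_ballotMatrix : (ballotMatrix R n e).det = 1 := by
  rw [det_of_isLowerTriangular _ fun i t hit => ?_]
  · simp [ballotMatrix, ballot_self]
  · rw [OrderDual.toDual_lt_toDual, Fin.lt_def] at hit
    simp [ballotMatrix, ballot_eq_zero_of_lt (show 2 * i + e < 2 * t + e by omega)]

theorem ballotMatrix_mul_transpose (he : e < 2) :
    ballotMatrix R n e * (ballotMatrix R n e)ᵀ =
      of fun i j : Fin n => (catalan (i + j + e) : R) := by
  ext i j
  rw [of_apply, ← ballot_two_mul_zero, ← sum_ballot_mul_ballot_same_parity j he i.isLt,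
    ← Fin.sum_univ_eq_sum_range]
  simp [ballotMatrix, mul_apply]

theorem det_hankel_catalan (he : e < 2) :
    det (of fun i j : Fin n => (catalan (i + j + e) : R)) = 1 := by
  rw [← ballotMatrix_mul_transpose he, det_mul, det_transpose, det_ballotMatrix, one_mul]

/-- For every natural number k, the (k+1)×(k+1) determinant with (i,j)
entry c_{i+j+1} equals the (k+1)×(k+1) determinant with (i,j) entry c_{i+j};
that is, H_{2k+1} = H_{2k} for the Hankel determinants of the Catalan numbers. -/
theorem catalan_hankel_odd_eq_even (k : ℕ) :
    Matrix.det (Matrix.of fun i j : Fin (k + 1) =>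
      (catalan (i.val + j.val + 1) : ℤ)) =
    Matrix.det (Matrix.of fun i j : Fin (k + 1) =>
      (catalan (i.val + j.val) : ℤ)) := by
  rw [det_hankel_catalan one_lt_two]
  simpa using (det_hankel_catalan (R := ℤ) (n := k + 1) two_pos).symm
end

section
/- Let f be the exponential generating function of the Catalan numbers and define u_1(t) = f'(t)/f(t). Then for every real t ≠ 0 with f(t) ≠ 0, u_1 satisfies the Riccati equation u_1'(t) + u_1(t)^2 − (4 − 2/t)·u_1(t) − 2/t = 0. -/
open scoped Nat

noncomputable def catalanEGF (t : ℝ) : ℝ := ∑' n : ℕ, (catalan n : ℝ) * t ^ n / n !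

/-!
Write `F k` for the exponential generating function of `n ↦ c (n + k)`, so that `f = F 0` and,
differentiating termwise, `F k' = F (k + 1)`. On coefficients of an exponential generating
function, multiplication by `t` acts as `b n ↦ n * b (n - 1)`; hence the recurrence
`(n + 2) c (n + 1) = (4 n + 2) c n` is the linear ODE `t F 2 + (2 - 4 t) F 1 - 2 F 0 = 0`.
Since `(F 1 / F 0)' = F 2 / F 0 - (F 1 / F 0) ^ 2`, substituting `F 2` from the ODE gives the
Riccati equation.
-/

noncomputable def egf (a : ℕ → ℝ) (t : ℝ) : ℝ := ∑' n, a n * t ^ n / n !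

section egf

variable {a : ℕ → ℝ} {C K : ℝ}

theorem succ_mul_div_factorial_succ (n : ℕ) (x : ℝ) :
    (n + 1 : ℝ) * x / (n + 1)! = x / n ! := by
  rw [Nat.factorial_succ, Nat.cast_mul, Nat.cast_succ, mul_div_mul_left _ _ n.cast_add_one_ne_zero]

theorem summable_egf_of_abs_le (ha : ∀ n, |a n| ≤ C * K ^ n) (t : ℝ) :
    Summable fun n => a n * t ^ n / n ! := by
  refine .of_norm_bounded ((Real.summable_pow_div_factorial (K * |t|)).mul_left C) fun n => ?_
  rw [Real.norm_eq_abs, abs_div, abs_mul, abs_pow, Nat.abs_cast, mul_pow, ← mul_div_assoc,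
    ← mul_assoc]
  gcongr
  exact ha n

theorem hasSum_egf_of_abs_le (ha : ∀ n, |a n| ≤ C * K ^ n) (t : ℝ) :
    HasSum (fun n => a n * t ^ n / n !) (egf a t) :=
  (summable_egf_of_abs_le ha t).hasSum

theorem hasSum_mul_egf {b : ℕ → ℝ} {t s : ℝ} (hb : HasSum (fun n => b n * t ^ n / n !) s) :
    HasSum (fun n => n * b (n - 1) * t ^ n / n !) (t * s) := by
  rw [← hasSum_nat_add_iff' 1]
  simp only [Finset.sum_range_one, Nat.cast_zero, zero_mul, zero_div, sub_zero]
  refine (hb.mul_left t).congr_fun fun n => ?_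
  rw [Nat.add_sub_cancel, Nat.cast_succ, mul_assoc, succ_mul_div_factorial_succ, pow_succ]
  ring

theorem hasDerivAt_egf (ha : ∀ n, |a n| ≤ C * K ^ n) (t : ℝ) :
    HasDerivAt (egf a) (egf (fun n => a (n + 1)) t) t := by
  have ha' : ∀ n, |a (n + 1)| ≤ C * K * K ^ n := fun n => by
    rw [mul_assoc, ← pow_succ']; exact ha (n + 1)
  have hcoeff : ∀ (b : ℕ → ℝ) (x : ℝ) (n : ℕ),
      b (n + 1) * ((n + 1 : ℕ) * x ^ (n + 1 - 1)) / (n + 1)! = b (n + 1) * x ^ n / n ! := by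
    intro b x n
    rw [Nat.add_sub_cancel, mul_left_comm, Nat.cast_succ, succ_mul_div_factorial_succ]
  have hsum : HasSum (fun n => a n * (n * t ^ (n - 1)) / n !) (egf (fun n => a (n + 1)) t) := by
    rw [← hasSum_nat_add_iff' 1]
    simp only [Finset.sum_range_one, Nat.cast_zero, zero_mul, mul_zero, zero_div, sub_zero]
    exact (hasSum_egf_of_abs_le ha' t).congr_fun (hcoeff a t)
  obtain ⟨R, hR⟩ : ∃ R, |t| < R := ⟨|t| + 1, lt_add_one _⟩
  have hbound : Summable fun n => |a n| * (n * R ^ (n - 1)) / n ! := by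
    rw [← summable_nat_add_iff 1]
    have habs : ∀ n, |(|a (n + 1)|)| ≤ C * K * K ^ n := fun n => (abs_abs _).trans_le (ha' n)
    exact (summable_egf_of_abs_le habs R).congr fun n => (hcoeff (fun n => |a n|) R n).symm
  rw [← hsum.tsum_eq]
  show HasDerivAt (fun z => ∑' n, a n * z ^ n / n !) _ t
  refine hasDerivAt_tsum_of_isPreconnected (g := fun n z => a n * z ^ n / n !)
    (g' := fun n z => a n * (n * z ^ (n - 1)) / n !) hbound Metric.isOpen_ball
    (convex_ball 0 R).isPreconnected (fun n y _ => ((hasDerivAt_pow n y).const_mul _).div_const _)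
    (fun n y hy => ?_) (Metric.mem_ball_self ((abs_nonneg t).trans_lt hR))
    (summable_egf_of_abs_le ha 0) (by simpa using hR)
  have hy : |y| ≤ R := (mem_ball_zero_iff.mp hy).le
  rw [Real.norm_eq_abs, abs_div, abs_mul, abs_mul, abs_pow, Nat.abs_cast, Nat.abs_cast]
  gcongr

end egf

theorem catalan_le_four_pow (n : ℕ) : catalan n ≤ 4 ^ n :=
  calc catalan n ≤ (n + 1) * catalan n := Nat.le_mul_of_pos_left _ n.succ_pos
    _ = n.centralBinom := succ_mul_catalan_eq_centralBinom n
    _ ≤ 4 ^ n := Nat.centralBinom_le_four_pow n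

theorem add_two_mul_catalan_succ (n : ℕ) :
    (n + 2) * catalan (n + 1) = 2 * (2 * n + 1) * catalan n := by
  apply Nat.eq_of_mul_eq_mul_left n.succ_pos
  calc (n + 1) * ((n + 2) * catalan (n + 1)) = (n + 1) * (n + 1).centralBinom := by
        rw [← succ_mul_catalan_eq_centralBinom]
    _ = 2 * (2 * n + 1) * n.centralBinom := Nat.succ_mul_centralBinom_succ n
    _ = (n + 1) * (2 * (2 * n + 1) * catalan n) := by
        rw [← succ_mul_catalan_eq_centralBinom]; ring

theorem abs_catalan_add_le (k n : ℕ) : |(catalan (n + k) : ℝ)| ≤ 4 ^ k * 4 ^ n := by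
  rw [Nat.abs_cast, ← pow_add, add_comm k]
  exact_mod_cast catalan_le_four_pow (n + k)

noncomputable def shiftedCatalanEGF (k : ℕ) : ℝ → ℝ := egf fun n => catalan (n + k)

theorem hasDerivAt_shiftedCatalanEGF (k : ℕ) (t : ℝ) :
    HasDerivAt (shiftedCatalanEGF k) (shiftedCatalanEGF (k + 1) t) t := by
  simpa only [shiftedCatalanEGF, Nat.add_assoc, Nat.add_comm 1 k] using
    hasDerivAt_egf (abs_catalan_add_le k) t

theorem shiftedCatalanEGF_ode (t : ℝ) :
    t * shiftedCatalanEGF 2 t + (2 - 4 * t) * shiftedCatalanEGF 1 t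
      - 2 * shiftedCatalanEGF 0 t = 0 := by
  have hc (k : ℕ) := hasSum_egf_of_abs_le (abs_catalan_add_le k) t
  have hmul := hasSum_mul_egf (b := fun n => (catalan (n + 2) : ℝ) - 4 * catalan (n + 1))
    (((hc 2).sub ((hc 1).mul_left 4)).congr_fun fun n => by ring)
  have hsum := hmul.add (((hc 1).sub (hc 0)).mul_left 2)
  have hzero := hsum.unique (hasSum_zero.congr_fun fun n => ?_)
  · simp only [shiftedCatalanEGF]
    linear_combination hzero
  -- the coefficient of `t ^ n / n !` is `(n + 2) c (n + 1) - (4 n + 2) c n`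
  rcases n with _ | n
  · simp [catalan_zero, catalan_one]
  · have hrec := congrArg (Nat.cast (R := ℝ)) (add_two_mul_catalan_succ (n + 1))
    push_cast at hrec ⊢
    simp only [Nat.add_zero, Nat.add_assoc, Nat.reduceAdd]
    linear_combination (t ^ (n + 1) / (n + 1)!) * hrec

/-- Let u₁(t) = f'(t)/f(t), where f is the exponential generating
function of the Catalan numbers. Then for every real t ≠ 0 with f(t) ≠ 0, u₁
satisfies the Riccati equation u₁'(t) + u₁(t)² − (4 − 2/t)·u₁(t) − 2/t = 0. -/
theorem catalan_egf_riccati (t : ℝ) (ht : t ≠ 0) (hf : catalanEGF t ≠ 0) :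
    deriv (fun s => deriv catalanEGF s / catalanEGF s) t
      + (deriv catalanEGF t / catalanEGF t) ^ 2
      - (4 - 2 / t) * (deriv catalanEGF t / catalanEGF t) - 2 / t = 0 := by
  have hf0 : catalanEGF = shiftedCatalanEGF 0 := rfl
  have hderiv : deriv catalanEGF = shiftedCatalanEGF 1 :=
    funext fun s => (hasDerivAt_shiftedCatalanEGF 0 s).deriv
  rw [hf0] at hf
  have hu := (hasDerivAt_shiftedCatalanEGF 1 t).fun_div (hasDerivAt_shiftedCatalanEGF 0 t) hf
  rw [hderiv, hf0, hu.deriv, one_add_one_eq_two]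
  field_simp
  linear_combination shiftedCatalanEGF 0 t * shiftedCatalanEGF_ode t
end
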